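/- Let α_1, α_2 ∈ (1,2), let n_1, n_2 ≥ 1 be integers, let c_x, c_y > 0, and set A = c_x (I_{n_2} ⊗ G_{n_1}^{(α_1)}) + c_y (G_{n_2}^{(α_2)} ⊗ I_{n_1}) and τ_1(A) = c_x (I_{n_2} ⊗ τ(G_{n_1}^{(α_1)})) + c_y (τ(G_{n_2}^{(α_2)}) ⊗ I_{n_1}). Then τ_1(A) is invertible and every eigenvalue λ of τ_1(A)^{-1} A is real and satisfies 1/2 < λ < 3/2; equivalently, 1/2 < (x^T A x)/(x^T τ_1(A) x) < 3/2 for every nonzero x ∈ ℝ^{n_1 n_2}. -/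

import Mathlib

/-- Grünwald–Letnikov coefficients: `g α 0 = 1`,
`g α l = (1 - (α+1)/l) * g α (l-1)` for `l ≥ 1`. -/
noncomputable def g (α : ℝ) : ℕ → ℝ
  | 0 => 1
  | l + 1 => (1 - (α + 1) / ((l : ℝ) + 1)) * g α l


/-- First column (Toeplitz symbol) of `G_n^{(α)}`: entry at distance `d` is
`2 g₁` if `d = 0`, `g₀ + g₂` if `d = 1`, and `g_{d+1}` if `d ≥ 2`. -/
noncomputable def gSymb (α : ℝ) : ℕ → ℝ
  | 0 => 2 * g α 1
  | 1 => g α 0 + g α 2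
  | d + 2 => g α (d + 3)

/-- The symmetric Toeplitz matrix `G_n^{(α)}`. -/
noncomputable def Gmat (α : ℝ) (n : ℕ) : Matrix (Fin n) (Fin n) ℝ :=
  Matrix.of fun i j => gSymb α (((i : ℤ) - (j : ℤ)).natAbs)

/-- The symmetric Toeplitz matrix `T_n = [t_{|i-j|}]` generated by `t`. -/
noncomputable def toeplitzMat (t : ℕ → ℝ) (n : ℕ) : Matrix (Fin n) (Fin n) ℝ :=
  Matrix.of fun i j => t (((i : ℤ) - (j : ℤ)).natAbs)

/-- The Hankel correction matrix `H_n` (1-based indices `i, j`):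
`[H_n]_{ij} = t_{i+j}` for `2 ≤ i+j ≤ n-1`, `0` for `n ≤ i+j ≤ n+2`,
and `t_{2n+2-(i+j)}` for `n+3 ≤ i+j ≤ 2n`. -/
noncomputable def hankelMat (t : ℕ → ℝ) (n : ℕ) : Matrix (Fin n) (Fin n) ℝ :=
  Matrix.of fun i j =>
    let s := (i : ℕ) + (j : ℕ) + 2
    if s ≤ n - 1 then t s else if s ≤ n + 2 then 0 else t (2 * n + 2 - s)

/-- The τ matrix `τ(T_n) = T_n - H_n`. -/
noncomputable def tauMat (t : ℕ → ℝ) (n : ℕ) : Matrix (Fin n) (Fin n) ℝ :=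
  toeplitzMat t n - hankelMat t n

open Matrix Kronecker

/-- `A = c_x (I_{n₂} ⊗ G_{n₁}^{(α₁)}) + c_y (G_{n₂}^{(α₂)} ⊗ I_{n₁})`. -/
noncomputable def Amat (α₁ α₂ : ℝ) (n₁ n₂ : ℕ) (cx cy : ℝ) :
    Matrix (Fin n₂ × Fin n₁) (Fin n₂ × Fin n₁) ℝ :=
  cx • ((1 : Matrix (Fin n₂) (Fin n₂) ℝ) ⊗ₖ Gmat α₁ n₁) +
    cy • (Gmat α₂ n₂ ⊗ₖ (1 : Matrix (Fin n₁) (Fin n₁) ℝ))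

/-- `τ₁(A) = c_x (I_{n₂} ⊗ τ(G_{n₁}^{(α₁)})) + c_y (τ(G_{n₂}^{(α₂)}) ⊗ I_{n₁})`. -/
noncomputable def tau1A (α₁ α₂ : ℝ) (n₁ n₂ : ℕ) (cx cy : ℝ) :
    Matrix (Fin n₂ × Fin n₁) (Fin n₂ × Fin n₁) ℝ :=
  cx • ((1 : Matrix (Fin n₂) (Fin n₂) ℝ) ⊗ₖ tauMat (gSymb α₁) n₁) +
    cy • (tauMat (gSymb α₂) n₂ ⊗ₖ (1 : Matrix (Fin n₁) (Fin n₁) ℝ))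

/-!
Write `G = T` and `τ(G) = T - H` with `T` the Toeplitz and `H` the Hankel part, both generated by
the symbol `t = gSymb α`. For `1 < α < 2` one has `t₀ = -2α`, `t_d ≥ 0` decreasing for `d ≥ 1`,
and, since `∑_{l ≤ L} g_l^{(α)} = g_L^{(α-1)} < 0`, also `t₀ + 2 ∑_{1 ≤ d < n} t_d < 0`. Then
`0 ≤ H ≤ T` off the diagonal and every row sum of `T + H` is negative, so for `-1 ≤ c ≤ 3` the
symmetric matrix `c H - T` is strictly diagonally dominant, hence positive definite, and so is the
matching Kronecker combination `-c τ₁(A) + (c - 1) A`. The cases `c = 1, -1, 3` say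
`τ₁(A) < 0`, `2A < τ₁(A)` and `3 τ₁(A) < 2A`, which are the Rayleigh quotient bounds. For an
eigenpair `(μ, z)` of `τ₁(A)⁻¹ A`, `μ = z* A z / z* τ₁(A) z`, and both Hermitian forms are sums of
the real forms at `Re z` and `Im z`, so `μ` obeys the same bounds.
-/

open Finset

section Coefficients

variable {α : ℝ}

lemma g_zero (α : ℝ) : g α 0 = 1 := rfl

lemma g_succ (α : ℝ) (l : ℕ) : g α (l + 1) = (1 - (α + 1) / (l + 1)) * g α l := rfl

lemma g_one (α : ℝ) : g α 1 = -α := by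
  simp [g]

lemma g_two (α : ℝ) : g α 2 = α * (α - 1) / 2 := by
  rw [g_succ, g_one]; push_cast; ring

lemma g_succ_eq_neg_div_mul_g_sub_one (α : ℝ) (l : ℕ) :
    g α (l + 1) = -(α / (l + 1)) * g (α - 1) l := by
  induction l with
  | zero => simp [g]
  | succ l ih =>
    rw [g_succ, ih, g_succ]
    push_cast
    field_simp
    ring

lemma g_sub_one_succ (α : ℝ) (l : ℕ) : g (α - 1) (l + 1) = g (α - 1) l + g α (l + 1) := by
  rw [g_succ (α - 1), g_succ_eq_neg_div_mul_g_sub_one α l]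
  field_simp
  ring

lemma g_neg (h₀ : 0 < α) (h₁ : α < 1) {l : ℕ} (hl : 1 ≤ l) : g α l < 0 := by
  induction l, hl using Nat.le_induction with
  | base => rw [g_one]; linarith
  | succ m hm ih =>
    have hfac : 0 < 1 - (α + 1) / ((m : ℝ) + 1) := by
      have : (1 : ℝ) ≤ m := by exact_mod_cast hm
      rw [sub_pos, div_lt_one (by positivity)]; linarith
    exact mul_neg_of_pos_of_neg hfac ih

lemma sum_Ico_gSymb (α : ℝ) (n : ℕ) :
    ∑ d ∈ Ico 1 (n + 2), gSymb α d = α + g (α - 1) (n + 2) := by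
  induction n with
  | zero =>
    rw [Nat.Ico_succ_singleton, sum_singleton]
    simp only [zero_add, gSymb, g_zero, g_two]
    ring
  | succ n ih =>
    rw [sum_Ico_succ_top (by omega), ih, g_sub_one_succ α (n + 2)]
    simp only [gSymb]
    ring

lemma gSymb_zero (α : ℝ) : gSymb α 0 = -(2 * α) := by
  simp [gSymb, g_one]

variable (h₁ : 1 < α) (h₂ : α < 2)
include h₁ h₂

lemma g_pos {l : ℕ} (hl : 2 ≤ l) : 0 < g α l := by
  induction l, hl using Nat.le_induction with
  | base => rw [g_two]; nlinarith
  | succ m hm ih =>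
    have hfac : 0 < 1 - (α + 1) / ((m : ℝ) + 1) := by
      have : (2 : ℝ) ≤ m := by exact_mod_cast hm
      rw [sub_pos, div_lt_one (by positivity)]; linarith
    exact mul_pos hfac ih

lemma g_succ_le {l : ℕ} (hl : 2 ≤ l) : g α (l + 1) ≤ g α l := by
  rw [g_succ]
  have : 0 ≤ (α + 1) / ((l : ℝ) + 1) := by positivity
  nlinarith [g_pos h₁ h₂ hl]

lemma gSymb_nonneg {d : ℕ} (hd : 1 ≤ d) : 0 ≤ gSymb α d := by
  match d, hd with
  | 1, _ => simp only [gSymb, g_zero]; linarith [g_pos h₁ h₂ le_rfl]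
  | d + 2, _ => exact (g_pos h₁ h₂ (by omega)).le

lemma gSymb_antitoneOn : AntitoneOn (gSymb α) {d | 1 ≤ d} := by
  refine antitoneOn_nat_Ici_of_succ_le fun d hd => ?_
  match d, hd with
  | 1, _ =>
    have := g_succ_le h₁ h₂ le_rfl
    simp only [gSymb, g_zero] at this ⊢
    linarith
  | d + 2, _ => exact g_succ_le h₁ h₂ (by omega)

lemma gSymb_zero_add_two_mul_sum_neg (n : ℕ) :
    gSymb α 0 + 2 * ∑ d ∈ Ico 1 n, gSymb α d < 0 := by
  rw [gSymb_zero]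
  match n with
  | 0 | 1 => rw [Ico_eq_empty_of_le (by norm_num), sum_empty]; linarith
  | n + 2 =>
    rw [sum_Ico_gSymb]
    linarith [g_neg (α := α - 1) (by linarith) (by linarith) (l := n + 2) (by omega)]

end Coefficients

lemma sum_comp_le_sum_of_injOn {ι κ : Type*} [DecidableEq κ] {s : Finset ι} {u : Finset κ}
    {f : κ → ℝ} (e : ι → κ) (he : Set.InjOn e s) (hmaps : Set.MapsTo e s u)
    (hf : ∀ k ∈ u, 0 ≤ f k) : ∑ i ∈ s, f (e i) ≤ ∑ k ∈ u, f k := by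
  rw [← sum_image he]
  exact sum_le_sum_of_subset_of_nonneg (image_subset_iff.2 hmaps) fun k hk _ => hf k hk

section ToeplitzHankel

variable {t : ℕ → ℝ} {n : ℕ}

lemma toeplitzMat_isSymm (t : ℕ → ℝ) (n : ℕ) : (toeplitzMat t n).IsSymm :=
  IsSymm.ext fun i j => by simp only [toeplitzMat, of_apply]; congr 1; omega

lemma hankelMat_isSymm (t : ℕ → ℝ) (n : ℕ) : (hankelMat t n).IsSymm :=
  IsSymm.ext fun i j => by simp only [hankelMat, of_apply, Nat.add_comm (j : ℕ)]

lemma tauMat_isSymm (t : ℕ → ℝ) (n : ℕ) : (tauMat t n).IsSymm :=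
  (toeplitzMat_isSymm t n).sub (hankelMat_isSymm t n)

lemma toeplitzMat_apply_self (t : ℕ → ℝ) (i : Fin n) : toeplitzMat t n i i = t 0 := by
  simp [toeplitzMat]

lemma sum_toeplitzMat_row (t : ℕ → ℝ) (i : Fin n) :
    ∑ j, toeplitzMat t n i j = t 0 + ∑ d ∈ Ico 1 ((i : ℕ) + 1), t d + ∑ d ∈ Ico 1 (n - i), t d := by
  have hi := i.isLt
  rw [show ∑ j, toeplitzMat t n i j = ∑ j ∈ range n, t ((i : ℤ) - (j : ℤ)).natAbs from
      Fin.sum_univ_eq_sum_range (fun j => t ((i : ℤ) - (j : ℤ)).natAbs) n,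
    ← sum_range_add_sum_Ico _ (show (i : ℕ) + 1 ≤ n by omega)]
  have hleft : ∑ j ∈ range ((i : ℕ) + 1), t ((i : ℤ) - (j : ℤ)).natAbs =
      t 0 + ∑ d ∈ Ico 1 ((i : ℕ) + 1), t d := by
    rw [← sum_range_eq_add_Ico _ (by omega), ← sum_range_reflect]
    refine sum_congr rfl fun j hj => ?_
    rw [mem_range] at hj
    congr 1
    omega
  have hright : ∑ j ∈ Ico ((i : ℕ) + 1) n, t ((i : ℤ) - (j : ℤ)).natAbs =
      ∑ d ∈ Ico 1 (n - i), t d := by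
    rw [← sum_Ico_add_right_sub_eq (f := t) 1 (n - i) i, Nat.sub_add_cancel hi.le, Nat.add_comm 1]
    refine sum_congr rfl fun j hj => ?_
    rw [mem_Ico] at hj
    congr 1
    omega
  rw [hleft, hright]

variable (ht : ∀ d, 1 ≤ d → 0 ≤ t d)
include ht

lemma hankelMat_nonneg (i j : Fin n) : 0 ≤ hankelMat t n i j := by
  simp only [hankelMat, of_apply]
  split_ifs
  · exact ht _ (by omega)
  · exact le_rfl
  · exact ht _ (by omega)

lemma hankelMat_le_toeplitzMat (hanti : AntitoneOn t {d | 1 ≤ d}) {i j : Fin n} (hij : i ≠ j) :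
    hankelMat t n i j ≤ toeplitzMat t n i j := by
  have := Fin.val_ne_of_ne hij
  have hi := i.isLt
  have hj := j.isLt
  simp only [hankelMat, toeplitzMat, of_apply]
  split_ifs
  · exact hanti (by omega : 1 ≤ _) (by omega : 1 ≤ _) (by omega)
  · exact ht _ (by omega)
  · exact hanti (by omega : 1 ≤ _) (by omega : 1 ≤ _) (by omega)

lemma sum_hankelMat_row_le (i : Fin n) :
    ∑ j, hankelMat t n i j ≤ ∑ d ∈ Ico ((i : ℕ) + 1) n, t d + ∑ d ∈ Ico (n - i) n, t d := by
  have hsplit : ∀ j : Fin n, hankelMat t n i j =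
      (if (i : ℕ) + j + 2 ≤ n - 1 then t (i + j + 2) else 0) +
        if n + 1 ≤ (i : ℕ) + j then t (2 * n - (i + j)) else 0 := by
    intro j
    simp only [hankelMat, of_apply]
    split_ifs <;> (try simp only [add_zero, zero_add]) <;> first | rfl | omega | (congr 1; omega)
  simp only [hsplit, sum_add_distrib, ← sum_filter]
  have hi := i.isLt
  gcongr
  · refine sum_comp_le_sum_of_injOn _ (fun a _ b _ h => Fin.ext (by omega))
      (fun a ha => ?_) fun d hd => ht d (by linarith [(mem_Ico.1 hd).1])
    have := (mem_filter.1 ha).2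
    exact mem_Ico.2 ⟨by omega, by omega⟩
  · refine sum_comp_le_sum_of_injOn _ (fun a ha b hb h => Fin.ext ?_) (fun a ha => ?_)
      fun d hd => ht d (by have := (mem_Ico.1 hd).1; omega)
    · have := (mem_filter.1 ha).2
      have := (mem_filter.1 hb).2
      omega
    · have := (mem_filter.1 ha).2
      exact mem_Ico.2 ⟨by omega, by omega⟩

lemma sum_toeplitzMat_add_hankelMat_row_le (i : Fin n) :
    ∑ j, (toeplitzMat t n i j + hankelMat t n i j) ≤ t 0 + 2 * ∑ d ∈ Ico 1 n, t d := by
  have hi := i.isLt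
  rw [sum_add_distrib, sum_toeplitzMat_row]
  have := sum_hankelMat_row_le ht i
  have := sum_Ico_consecutive t (show 1 ≤ (i : ℕ) + 1 by omega) (show (i : ℕ) + 1 ≤ n by omega)
  have := sum_Ico_consecutive t (show 1 ≤ n - i by omega) (show n - i ≤ n by omega)
  linarith

end ToeplitzHankel

lemma abs_mul_sub_le_add {c h t : ℝ} (hc : -1 ≤ c) (hc' : c ≤ 3) (h₀ : 0 ≤ h) (hht : h ≤ t) :
    |c * h - t| ≤ t + h :=
  abs_le.2 ⟨by nlinarith, by nlinarith⟩

section DiagonalDominance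

variable {ι : Type*} [Fintype ι] [DecidableEq ι] {M : Matrix ι ι ℝ}

lemma Matrix.IsSymm.sum_mul_sq_le_dotProduct_mulVec (hM : M.IsSymm) (x : ι → ℝ) :
    ∑ i, (M i i - ∑ j ∈ univ.erase i, |M i j|) * x i ^ 2 ≤ x ⬝ᵥ (M *ᵥ x) := by
  have hoff : ∀ i j, -(|M i j| * x i ^ 2 + |M i j| * x j ^ 2) / 2 ≤ x i * M i j * x j := by
    intro i j
    have h1 := neg_abs_le (M i j)
    have h2 := le_abs_self (M i j)
    rcases le_total 0 (x i * x j) with h | h <;>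
      nlinarith [abs_nonneg (M i j), mul_nonneg (abs_nonneg (M i j)) (sq_nonneg (x i - x j)),
        mul_nonneg (abs_nonneg (M i j)) (sq_nonneg (x i + x j))]
  have hswap : ∑ i, ∑ j ∈ univ.erase i, |M i j| * x j ^ 2 =
      ∑ i, ∑ j ∈ univ.erase i, |M i j| * x i ^ 2 := by
    simp only [sum_erase_eq_sub (mem_univ _), sum_sub_distrib]
    rw [sum_comm]
    simp only [hM.apply]
  have hrow : ∀ i, x i * M i i * x i + ∑ j ∈ univ.erase i, x i * M i j * x j =
      ∑ j, x i * M i j * x j := fun i => add_sum_erase _ (fun j => x i * M i j * x j) (mem_univ i)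
  calc ∑ i, (M i i - ∑ j ∈ univ.erase i, |M i j|) * x i ^ 2
      = ∑ i, (x i * M i i * x i +
          ∑ j ∈ univ.erase i, -(|M i j| * x i ^ 2 + |M i j| * x j ^ 2) / 2) := by
        have hdiag : ∑ i, x i * M i i * x i = ∑ i, M i i * x i ^ 2 :=
          sum_congr rfl fun i _ => by ring
        simp only [sum_add_distrib, neg_div, sum_neg_distrib, ← sum_div, hswap, sub_mul, sum_mul,
          sum_sub_distrib, hdiag]
        ring
    _ ≤ ∑ i, (x i * M i i * x i + ∑ j ∈ univ.erase i, x i * M i j * x j) := by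
        gcongr with i _ j
        exact hoff i j
    _ = x ⬝ᵥ (M *ᵥ x) := by
        simp only [hrow, dotProduct, mulVec, mul_sum]
        exact sum_congr rfl fun i _ => sum_congr rfl fun j _ => by ring

lemma Matrix.IsSymm.posDef_of_sum_abs_lt_diag (hM : M.IsSymm)
    (h : ∀ i, ∑ j ∈ univ.erase i, |M i j| < M i i) : M.PosDef := by
  refine .of_dotProduct_mulVec_pos (isHermitian_iff_isSymm.2 hM) fun x hx => ?_
  obtain ⟨i, hi⟩ := Function.ne_iff.mp hx
  rw [star_trivial]
  refine lt_of_lt_of_le ?_ (hM.sum_mul_sq_le_dotProduct_mulVec x)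
  exact sum_pos' (fun j _ => mul_nonneg (sub_nonneg.2 (h j).le) (sq_nonneg _))
    ⟨i, mem_univ _, mul_pos (sub_pos.2 (h i)) (pow_two_pos_of_ne_zero hi)⟩

end DiagonalDominance

lemma posDef_smul_hankelMat_sub_toeplitzMat {t : ℕ → ℝ} {n : ℕ} (ht : ∀ d, 1 ≤ d → 0 ≤ t d)
    (hanti : AntitoneOn t {d | 1 ≤ d}) (hsum : t 0 + 2 * ∑ d ∈ Ico 1 n, t d < 0) {c : ℝ}
    (hc : -1 ≤ c) (hc' : c ≤ 3) : (c • hankelMat t n - toeplitzMat t n).PosDef := by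
  refine (((hankelMat_isSymm t n).smul c).sub (toeplitzMat_isSymm t n)).posDef_of_sum_abs_lt_diag
    fun i => ?_
  have hoff : ∀ j ∈ univ.erase i, |(c • hankelMat t n - toeplitzMat t n) i j| ≤
      toeplitzMat t n i j + hankelMat t n i j := fun j hj =>
    abs_mul_sub_le_add hc hc' (hankelMat_nonneg ht i j)
      (hankelMat_le_toeplitzMat ht hanti (ne_of_mem_erase hj).symm)
  have hrow := (sum_toeplitzMat_add_hankelMat_row_le ht i).trans_lt hsum
  rw [← add_sum_erase _ _ (mem_univ i), toeplitzMat_apply_self] at hrow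
  have hsum_off := sum_le_sum hoff
  simp only [Matrix.sub_apply, Matrix.smul_apply, smul_eq_mul, toeplitzMat_apply_self] at hsum_off ⊢
  nlinarith [mul_nonneg (by linarith : 0 ≤ c + 1) (hankelMat_nonneg ht i i)]

section Kronecker

variable {m n : Type*}

lemma Matrix.IsSymm.kronecker {α : Type*} [Mul α] {A : Matrix m m α} {B : Matrix n n α}
    (hA : A.IsSymm) (hB : B.IsSymm) : (A ⊗ₖ B).IsSymm := by
  rw [IsSymm, ← kroneckerMap_transpose, hA.eq, hB.eq]

variable [Fintype m] [Fintype n] [DecidableEq m] [DecidableEq n]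

lemma posDef_smul_one_kronecker_add_smul_kronecker_one {X : Matrix n n ℝ} {Y : Matrix m m ℝ}
    (hX : X.PosDef) (hY : Y.PosDef) {a b : ℝ} (ha : 0 < a) (hb : 0 < b) :
    (a • ((1 : Matrix m m ℝ) ⊗ₖ X) + b • (Y ⊗ₖ (1 : Matrix n n ℝ))).PosDef :=
  ((PosDef.one.kronecker hX).smul ha).add ((hY.kronecker PosDef.one).smul hb)

end Kronecker

section GeneralizedEigenvalues

variable {ι : Type*} [Fintype ι] {A B : Matrix ι ι ℝ}

lemma Matrix.IsSymm.star_dotProduct_map_ofReal_mulVec (hA : A.IsSymm) (z : ι → ℂ) :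
    star z ⬝ᵥ (A.map (fun a : ℝ => (a : ℂ)) *ᵥ z) =
      ↑((fun i => (z i).re) ⬝ᵥ (A *ᵥ fun i => (z i).re) +
        (fun i => (z i).im) ⬝ᵥ (A *ᵥ fun i => (z i).im)) := by
  set u : ι → ℝ := fun i => (z i).re
  set v : ι → ℝ := fun i => (z i).im
  have hcast : ∀ a b : ι → ℝ, (fun i => (a i : ℂ)) ⬝ᵥ (A.map (↑) *ᵥ fun i => (b i : ℂ)) =
      ↑(a ⬝ᵥ (A *ᵥ b)) := fun a b => by
    change _ = Complex.ofRealHom (a ⬝ᵥ (A *ᵥ b))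
    rw [RingHom.map_dotProduct]
    congr 1
    funext i
    exact (RingHom.map_mulVec Complex.ofRealHom A b i).symm
  have hsymm : u ⬝ᵥ (A *ᵥ v) = v ⬝ᵥ (A *ᵥ u) := by
    rw [dotProduct_mulVec, ← mulVec_transpose, hA.eq, dotProduct_comm]
  have hz : z = (fun i => (u i : ℂ)) + Complex.I • fun i => (v i : ℂ) :=
    funext fun i => by simp [u, v, mul_comm Complex.I, Complex.re_add_im]
  have hstar : star z = (fun i => (u i : ℂ)) - Complex.I • fun i => (v i : ℂ) :=
    funext fun i => Complex.ext (by simp [u, v]) (by simp [u, v])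
  rw [hstar, hz]
  simp only [mulVec_add, mulVec_smul, dotProduct_add, sub_dotProduct, dotProduct_smul,
    smul_dotProduct, hcast, smul_eq_mul, hsymm]
  push_cast
  linear_combination -((v ⬝ᵥ (A *ᵥ v) : ℝ) : ℂ) * Complex.I_mul_I

variable [DecidableEq ι]

lemma Matrix.IsSymm.isUnit_of_dotProduct_mulVec_neg (hB : B.IsSymm)
    (h : ∀ x ≠ 0, x ⬝ᵥ (B *ᵥ x) < 0) : IsUnit B := by
  have hneg : (-B).PosDef := .of_dotProduct_mulVec_pos (isHermitian_iff_isSymm.2 hB.neg)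
    fun x hx => by simpa [neg_mulVec] using h x hx
  simpa using hneg.isUnit.neg

lemma eigenvalue_inv_mul_mem_Ioo (hA : A.IsSymm) (hB : B.IsSymm) {lo hi : ℝ}
    (h : ∀ x ≠ 0, x ⬝ᵥ (B *ᵥ x) < 0 ∧ x ⬝ᵥ (A *ᵥ x) < lo * x ⬝ᵥ (B *ᵥ x) ∧
      hi * x ⬝ᵥ (B *ᵥ x) < x ⬝ᵥ (A *ᵥ x))
    {μ : ℂ} {z : ι → ℂ} (hz : z ≠ 0)
    (hμ : (B⁻¹ * A).map (fun a : ℝ => (a : ℂ)) *ᵥ z = μ • z) :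
    μ.im = 0 ∧ lo < μ.re ∧ μ.re < hi := by
  have hBdet : IsUnit B.det := (isUnit_iff_isUnit_det B).1
    (hB.isUnit_of_dotProduct_mulVec_neg fun x hx => (h x hx).1)
  have hAz : A.map (fun a : ℝ => (a : ℂ)) *ᵥ z = μ • (B.map (fun a : ℝ => (a : ℂ)) *ᵥ z) := by
    have hBA : A = B * (B⁻¹ * A) := by rw [← mul_assoc, mul_nonsing_inv _ hBdet, one_mul]
    have hmap : A.map (fun a : ℝ => (a : ℂ)) =
        B.map (fun a : ℝ => (a : ℂ)) * (B⁻¹ * A).map (fun a : ℝ => (a : ℂ)) := by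
      conv_lhs => rw [hBA]
      exact Matrix.map_mul (f := Complex.ofRealHom)
    rw [hmap, ← mulVec_mulVec, hμ, mulVec_smul]
  set u : ι → ℝ := fun i => (z i).re
  set v : ι → ℝ := fun i => (z i).im
  have hform := congrArg (star z ⬝ᵥ ·) hAz
  simp only [dotProduct_smul, hA.star_dotProduct_map_ofReal_mulVec,
    hB.star_dotProduct_map_ofReal_mulVec, smul_eq_mul] at hform
  have hweak : ∀ x, x ⬝ᵥ (B *ᵥ x) ≤ 0 ∧ x ⬝ᵥ (A *ᵥ x) ≤ lo * x ⬝ᵥ (B *ᵥ x) ∧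
      hi * x ⬝ᵥ (B *ᵥ x) ≤ x ⬝ᵥ (A *ᵥ x) := fun x => by
    rcases eq_or_ne x 0 with rfl | hx
    · simp
    · obtain ⟨h₁, h₂, h₃⟩ := h x hx
      exact ⟨h₁.le, h₂.le, h₃.le⟩
  have huv : u ≠ 0 ∨ v ≠ 0 := by
    by_contra! huv
    exact hz (funext fun i => Complex.ext (congrFun huv.1 i) (congrFun huv.2 i))
  set a := u ⬝ᵥ (A *ᵥ u) + v ⬝ᵥ (A *ᵥ v)
  set b := u ⬝ᵥ (B *ᵥ u) + v ⬝ᵥ (B *ᵥ v)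
  obtain ⟨hb, hlo, hhi⟩ : b < 0 ∧ a < lo * b ∧ hi * b < a := by
    obtain ⟨hu₁, hu₂, hu₃⟩ := hweak u
    obtain ⟨hv₁, hv₂, hv₃⟩ := hweak v
    rcases huv with hu | hv
    · obtain ⟨h₁, h₂, h₃⟩ := h u hu
      exact ⟨by linarith, by linarith, by linarith⟩
    · obtain ⟨h₁, h₂, h₃⟩ := h v hv
      exact ⟨by linarith, by linarith, by linarith⟩
  have hμab : μ = ↑(a / b) := by
    rw [Complex.ofReal_div, eq_div_iff (by exact_mod_cast hb.ne)]
    exact hform.symm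
  rw [hμab, Complex.ofReal_im, Complex.ofReal_re]
  exact ⟨rfl, (lt_div_iff_of_neg hb).2 hlo, (div_lt_iff_of_neg hb).2 hhi⟩

end GeneralizedEigenvalues

section TauPreconditioner

variable {α₁ α₂ : ℝ} {n₁ n₂ : ℕ} {cx cy : ℝ}

lemma Amat_isSymm : (Amat α₁ α₂ n₁ n₂ cx cy).IsSymm :=
  ((isSymm_one.kronecker (toeplitzMat_isSymm _ _)).smul cx).add
    (((toeplitzMat_isSymm _ _).kronecker isSymm_one).smul cy)

lemma tau1A_isSymm : (tau1A α₁ α₂ n₁ n₂ cx cy).IsSymm :=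
  ((isSymm_one.kronecker (tauMat_isSymm _ _)).smul cx).add
    (((tauMat_isSymm _ _).kronecker isSymm_one).smul cy)

lemma smul_tau1A_add_smul_Amat (c : ℝ) :
    (-c) • tau1A α₁ α₂ n₁ n₂ cx cy + (c - 1) • Amat α₁ α₂ n₁ n₂ cx cy =
      cx • ((1 : Matrix (Fin n₂) (Fin n₂) ℝ) ⊗ₖ
          (c • hankelMat (gSymb α₁) n₁ - toeplitzMat (gSymb α₁) n₁)) +
        cy • ((c • hankelMat (gSymb α₂) n₂ - toeplitzMat (gSymb α₂) n₂) ⊗ₖ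
          (1 : Matrix (Fin n₁) (Fin n₁) ℝ)) := by
  ext ⟨r, i⟩ ⟨s, j⟩
  simp only [tau1A, Amat, tauMat, Gmat, toeplitzMat, Matrix.add_apply, Matrix.smul_apply,
    Matrix.sub_apply, kroneckerMap_apply, smul_eq_mul]
  ring

lemma posDef_smul_hankelMat_gSymb_sub_toeplitzMat {α : ℝ} (h₁ : 1 < α) (h₂ : α < 2) (n : ℕ)
    {c : ℝ} (hc : -1 ≤ c) (hc' : c ≤ 3) :
    (c • hankelMat (gSymb α) n - toeplitzMat (gSymb α) n).PosDef :=
  posDef_smul_hankelMat_sub_toeplitzMat (fun _ => gSymb_nonneg h₁ h₂) (gSymb_antitoneOn h₁ h₂)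
    (gSymb_zero_add_two_mul_sum_neg h₁ h₂ n) hc hc'

lemma dotProduct_smul_tau1A_add_smul_Amat_mulVec_pos (hα₁ : 1 < α₁ ∧ α₁ < 2)
    (hα₂ : 1 < α₂ ∧ α₂ < 2) (hcx : 0 < cx) (hcy : 0 < cy) {c : ℝ} (hc : -1 ≤ c) (hc' : c ≤ 3)
    {x : Fin n₂ × Fin n₁ → ℝ} (hx : x ≠ 0) :
    0 < -c * (x ⬝ᵥ (tau1A α₁ α₂ n₁ n₂ cx cy *ᵥ x)) +
      (c - 1) * (x ⬝ᵥ (Amat α₁ α₂ n₁ n₂ cx cy *ᵥ x)) := by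
  have hpos := posDef_smul_one_kronecker_add_smul_kronecker_one
    (posDef_smul_hankelMat_gSymb_sub_toeplitzMat hα₁.1 hα₁.2 n₁ hc hc')
    (posDef_smul_hankelMat_gSymb_sub_toeplitzMat hα₂.1 hα₂.2 n₂ hc hc') hcx hcy
  rw [← smul_tau1A_add_smul_Amat] at hpos
  simpa only [star_trivial, add_mulVec, smul_mulVec, dotProduct_add, dotProduct_smul,
    smul_eq_mul] using hpos.dotProduct_mulVec_pos hx

end TauPreconditioner

theorem stmt17_general (α₁ α₂ : ℝ) (hα₁ : 1 < α₁ ∧ α₁ < 2) (hα₂ : 1 < α₂ ∧ α₂ < 2)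
    (n₁ n₂ : ℕ) (cx cy : ℝ) (hcx : 0 < cx) (hcy : 0 < cy) :
    IsUnit (tau1A α₁ α₂ n₁ n₂ cx cy) ∧
      (∀ (μ : ℂ) (z : Fin n₂ × Fin n₁ → ℂ), z ≠ 0 →
        (((tau1A α₁ α₂ n₁ n₂ cx cy)⁻¹ * Amat α₁ α₂ n₁ n₂ cx cy).map
            (fun a : ℝ => (a : ℂ))) *ᵥ z = μ • z →
        μ.im = 0 ∧ 1 / 2 < μ.re ∧ μ.re < 3 / 2) ∧
      ∀ x : Fin n₂ × Fin n₁ → ℝ, x ≠ 0 →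
        1 / 2 < (x ⬝ᵥ (Amat α₁ α₂ n₁ n₂ cx cy *ᵥ x)) /
            (x ⬝ᵥ (tau1A α₁ α₂ n₁ n₂ cx cy *ᵥ x)) ∧
          (x ⬝ᵥ (Amat α₁ α₂ n₁ n₂ cx cy *ᵥ x)) /
            (x ⬝ᵥ (tau1A α₁ α₂ n₁ n₂ cx cy *ᵥ x)) < 3 / 2 := by
  have hbounds : ∀ x : Fin n₂ × Fin n₁ → ℝ, x ≠ 0 →
      x ⬝ᵥ (tau1A α₁ α₂ n₁ n₂ cx cy *ᵥ x) < 0 ∧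
      x ⬝ᵥ (Amat α₁ α₂ n₁ n₂ cx cy *ᵥ x) < 1 / 2 * x ⬝ᵥ (tau1A α₁ α₂ n₁ n₂ cx cy *ᵥ x) ∧
      3 / 2 * x ⬝ᵥ (tau1A α₁ α₂ n₁ n₂ cx cy *ᵥ x) < x ⬝ᵥ (Amat α₁ α₂ n₁ n₂ cx cy *ᵥ x) := by
    intro x hx
    have hpos (c : ℝ) (hc : -1 ≤ c) (hc' : c ≤ 3) :=
      dotProduct_smul_tau1A_add_smul_Amat_mulVec_pos hα₁ hα₂ hcx hcy hc hc' hx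
    have h₁ := hpos 1 (by norm_num) (by norm_num)
    have h₂ := hpos (-1) (by norm_num) (by norm_num)
    have h₃ := hpos 3 (by norm_num) (by norm_num)
    exact ⟨by linarith, by linarith, by linarith⟩
  refine ⟨tau1A_isSymm.isUnit_of_dotProduct_mulVec_neg fun x hx => (hbounds x hx).1,
    fun μ z hz hμ => eigenvalue_inv_mul_mem_Ioo Amat_isSymm tau1A_isSymm hbounds hz hμ,
    fun x hx => ?_⟩
  obtain ⟨hneg, hlo, hhi⟩ := hbounds x hx
  exact ⟨(lt_div_iff_of_neg hneg).2 hlo, (div_lt_iff_of_neg hneg).2 hhi⟩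

theorem stmt17 (α₁ α₂ : ℝ) (hα₁ : 1 < α₁ ∧ α₁ < 2) (hα₂ : 1 < α₂ ∧ α₂ < 2)
    (n₁ n₂ : ℕ) (hn₁ : 1 ≤ n₁) (hn₂ : 1 ≤ n₂) (cx cy : ℝ) (hcx : 0 < cx) (hcy : 0 < cy) :
    IsUnit (tau1A α₁ α₂ n₁ n₂ cx cy) ∧
      (∀ (μ : ℂ) (z : Fin n₂ × Fin n₁ → ℂ), z ≠ 0 →
        (((tau1A α₁ α₂ n₁ n₂ cx cy)⁻¹ * Amat α₁ α₂ n₁ n₂ cx cy).map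
            (fun a : ℝ => (a : ℂ))) *ᵥ z = μ • z →
        μ.im = 0 ∧ 1 / 2 < μ.re ∧ μ.re < 3 / 2) ∧
      ∀ x : Fin n₂ × Fin n₁ → ℝ, x ≠ 0 →
        1 / 2 < (x ⬝ᵥ (Amat α₁ α₂ n₁ n₂ cx cy *ᵥ x)) /
            (x ⬝ᵥ (tau1A α₁ α₂ n₁ n₂ cx cy *ᵥ x)) ∧
          (x ⬝ᵥ (Amat α₁ α₂ n₁ n₂ cx cy *ᵥ x)) /
            (x ⬝ᵥ (tau1A α₁ α₂ n₁ n₂ cx cy *ᵥ x)) < 3 / 2 :=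
  stmt17_general α₁ α₂ hα₁ hα₂ n₁ n₂ cx cy hcx hcy
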